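/- Let (T,v) be a 1-pseudo-regular rooted tree and let A ⊂ V(T) be a non-empty finite set of vertices such that the induced subgraph G(A) is connected. Then |∂_e A|/|A| ≥ 1/3 and |∂_e^1 A|/|A| ≥ 1/6. -/
import Mathlib


open scoped ENNReal

namespace TreePaper

variable {V : Type*}

/-- The (outer) vertex boundary `∂A = {w : d(w,A) = 1}` of a set of vertices. -/
def vboundary (G : SimpleGraph V) (A : Set V) : Set V :=
  {w | w ∉ A ∧ ∃ a ∈ A, G.Adj w a}

/-- The non-essential vertices of `∂A`: those `w ∈ ∂A` with `d(v,w) < d(v,z)` for all `z ∈ A`. -/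
def neBoundary (G : SimpleGraph V) (v : V) (A : Set V) : Set V :=
  {w ∈ vboundary G A | ∀ z ∈ A, G.dist v w < G.dist v z}

/-- The essential boundary `∂_e A = ∂A ∖ ∂_{ne} A`. -/
def eBoundary (G : SimpleGraph V) (v : V) (A : Set V) : Set V :=
  vboundary G A \ neBoundary G v A

/-- `∂_e^1 A`: the vertices of `A` at distance 1 from the essential boundary `∂_e A`. -/
def eBoundary1 (G : SimpleGraph V) (v : V) (A : Set V) : Set V :=
  {a ∈ A | ∃ w ∈ eBoundary G v A, G.Adj a w}

/-- `m` lies on the geodesic `[x y]`. -/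
def Btw (G : SimpleGraph V) (x m y : V) : Prop :=
  G.dist x m + G.dist m y = G.dist x y

/-- `(T,v)` is `K`-pseudo-regular. -/
def KPseudoRegular (G : SimpleGraph V) (v : V) (K : ℕ) : Prop :=
  ∀ a : V, ∃ y₁ y₂ : V, y₁ ≠ y₂ ∧
    G.dist v y₁ = G.dist v a + K ∧ Btw G v a y₁ ∧
    G.dist v y₂ = G.dist v a + K ∧ Btw G v a y₂

/-- If `(T,v)` is a `1`-pseudo-regular rooted tree and `A` is a non-empty
finite set of vertices whose induced subgraph `G(A)` is connected, then `|∂_e A|/|A| ≥ 1/3`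
and `|∂_e^1 A|/|A| ≥ 1/6`. -/
lemma uniq_parent {G : SimpleGraph V} (hT : G.IsTree) {v a a' y : V}
    (h : G.Adj a y) (h' : G.Adj a' y)
    (hd : G.dist v a + 1 = G.dist v y) (hd' : G.dist v a' + 1 = G.dist v y) : a = a' := by
  classical
  have hpath : ∀ (b : V), G.Adj b y → G.dist v b + 1 = G.dist v y →
      ∃ p : G.Walk v b, p.IsPath ∧ y ∉ p.support := by
    intro b hb hdb
    obtain ⟨w, hw⟩ := hT.isConnected.exists_walk_length_eq_dist v b
    refine ⟨w.bypass, w.bypass_isPath, fun hy => ?_⟩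
    have h1 : (w.bypass.takeUntil y hy).length ≤ w.bypass.length :=
      SimpleGraph.Walk.length_takeUntil_le _ hy
    have h2 : G.dist v y ≤ (w.bypass.takeUntil y hy).length :=
      SimpleGraph.dist_le _
    have h3 : w.bypass.length ≤ w.length := SimpleGraph.Walk.length_bypass_le _
    omega
  obtain ⟨p, hp, hyp⟩ := hpath a h hd
  obtain ⟨q, hq, hyq⟩ := hpath a' h' hd'
  have hP : (SimpleGraph.Walk.cons h.symm p.reverse).IsPath := by
    rw [SimpleGraph.Walk.cons_isPath_iff]
    exact ⟨hp.reverse, by simpa using hyp⟩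
  have hQ : (SimpleGraph.Walk.cons h'.symm q.reverse).IsPath := by
    rw [SimpleGraph.Walk.cons_isPath_iff]
    exact ⟨hq.reverse, by simpa using hyq⟩
  have heq := SimpleGraph.isAcyclic_iff_path_unique.mp hT.IsAcyclic
    ⟨SimpleGraph.Walk.cons h.symm p.reverse, hP⟩
    ⟨SimpleGraph.Walk.cons h'.symm q.reverse, hQ⟩
  have hsupp : (SimpleGraph.Walk.cons h.symm p.reverse).support
      = (SimpleGraph.Walk.cons h'.symm q.reverse).support := by
    rw [Subtype.ext_iff] at heq; exact congrArg SimpleGraph.Walk.support heq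
  rw [SimpleGraph.Walk.support_cons, SimpleGraph.Walk.support_cons,
    p.reverse.support_eq_cons, q.reverse.support_eq_cons] at hsupp
  simp only [List.cons.injEq] at hsupp
  exact hsupp.2.1

theorem essentialBoundary_ratio_of_onePseudoRegular (G : SimpleGraph V) (v : V)
    (hT : G.IsTree) (hpr : KPseudoRegular G v 1)
    (A : Finset V) (hA : A.Nonempty) (hconn : (G.induce (A : Set V)).Connected) :
    (1 : ℝ≥0∞) / 3 ≤ ((eBoundary G v (A : Set V)).encard : ℝ≥0∞) / (A.card : ℝ≥0∞) ∧
    (1 : ℝ≥0∞) / 6 ≤ ((eBoundary1 G v (A : Set V)).encard : ℝ≥0∞) / (A.card : ℝ≥0∞) := by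
  classical
  choose c₁ c₂ hne hd₁ hb₁ hd₂ hb₂ using hpr
  have hadj₁ : ∀ a, G.Adj a (c₁ a) := by
    intro a
    have hb := hb₁ a
    have hd := hd₁ a
    unfold Btw at hb
    rw [← SimpleGraph.dist_eq_one_iff_adj]
    omega
  have hadj₂ : ∀ a, G.Adj a (c₂ a) := by
    intro a
    have hb := hb₂ a
    have hd := hd₂ a
    unfold Btw at hb
    rw [← SimpleGraph.dist_eq_one_iff_adj]
    omega
  have hup : ∀ a a' x : V, G.Adj a x → G.Adj a' x →
      G.dist v x = G.dist v a + 1 → G.dist v x = G.dist v a' + 1 → a = a' :=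
    fun a a' x h h' hd hd' => uniq_parent hT h h' hd.symm hd'.symm
  obtain ⟨r, hrA, hrmin⟩ := A.exists_min_image (fun a => G.dist v a) hA
  set Bad : Finset V := A.filter (fun a => c₁ a ∈ A ∧ c₂ a ∈ A) with hBad
  set Good : Finset V := A.filter (fun a => ¬(c₁ a ∈ A ∧ c₂ a ∈ A)) with hGood
  have hsplit : Bad.card + Good.card = A.card := Finset.card_filter_add_card_filter_not _
  have hbadle : 2 * Bad.card + 1 ≤ A.card := by
    have hinj1 : Set.InjOn c₁ Bad := fun x hx y hy h =>
      hup x y (c₁ x) (hadj₁ x) (h ▸ hadj₁ y) (hd₁ x) (h ▸ hd₁ y)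
    have hinj2 : Set.InjOn c₂ Bad := fun x hx y hy h =>
      hup x y (c₂ x) (hadj₂ x) (h ▸ hadj₂ y) (hd₂ x) (h ▸ hd₂ y)
    have hcard1 : (Bad.image c₁).card = Bad.card := Finset.card_image_of_injOn hinj1
    have hcard2 : (Bad.image c₂).card = Bad.card := Finset.card_image_of_injOn hinj2
    have hdisj : Disjoint (Bad.image c₁) (Bad.image c₂) := by
      rw [Finset.disjoint_left]
      rintro x hx1 hx2
      obtain ⟨a, ha, rfl⟩ := Finset.mem_image.mp hx1
      obtain ⟨b, hb, hba⟩ := Finset.mem_image.mp hx2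
      have : b = a := hup b a (c₁ a) (hba ▸ hadj₂ b) (hadj₁ a) (hba ▸ hd₂ b) (hd₁ a)
      subst this
      exact hne b hba.symm
    have hsub : Bad.image c₁ ∪ Bad.image c₂ ⊆ A.erase r := by
      intro x hx
      rcases Finset.mem_union.mp hx with hx | hx <;>
      · obtain ⟨a, ha, rfl⟩ := Finset.mem_image.mp hx
        have haA : a ∈ A := (Finset.mem_filter.mp ha).1
        have hmem := (Finset.mem_filter.mp ha).2
        refine Finset.mem_erase.mpr ⟨?_, by tauto⟩
        intro hxr
        have h1 := hrmin a haA
        first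
          | (have h2 := hd₁ a; rw [hxr] at h2; omega)
          | (have h2 := hd₂ a; rw [hxr] at h2; omega)
    have hle := Finset.card_le_card hsub
    rw [Finset.card_union_of_disjoint hdisj, hcard1, hcard2,
      Finset.card_erase_of_mem hrA] at hle
    have : 0 < A.card := Finset.card_pos.mpr hA
    omega
  have hgood : A.card ≤ 2 * Good.card := by omega
  set f : V → V := fun a => if c₁ a ∉ A then c₁ a else c₂ a with hf
  have hfchild : ∀ a ∈ Good, (f a ∉ A) ∧ G.Adj a (f a) ∧
      G.dist v (f a) = G.dist v a + 1 := by
    intro a ha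
    have hmem := (Finset.mem_filter.mp ha).2
    by_cases h1 : c₁ a ∈ A
    · have h2 : c₂ a ∉ A := fun hc => hmem ⟨h1, hc⟩
      have hfa : f a = c₂ a := by simp only [hf]; rw [if_neg (not_not_intro h1)]
      rw [hfa]
      exact ⟨h2, hadj₂ a, hd₂ a⟩
    · have hfa : f a = c₁ a := by simp only [hf]; rw [if_pos h1]
      rw [hfa]
      exact ⟨h1, hadj₁ a, hd₁ a⟩
  have hfinj : Set.InjOn f (Good : Set V) := by
    intro x hx y hy hxy
    have hx' : x ∈ Good := hx
    have hy' : y ∈ Good := hy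
    obtain ⟨_, hax, hdx⟩ := hfchild x hx'
    obtain ⟨_, hay, hdy⟩ := hfchild y hy'
    exact hup x y (f x) hax (hxy ▸ hay) hdx (hxy ▸ hdy)
  have hfeB : ∀ a ∈ Good, f a ∈ eBoundary G v (A : Set V) := by
    intro a ha
    obtain ⟨hfa, hadj, hd⟩ := hfchild a ha
    have haA : a ∈ A := (Finset.mem_filter.mp ha).1
    constructor
    · exact ⟨by simpa using hfa, a, by simpa using haA, hadj.symm⟩
    · rintro ⟨-, hlt⟩
      have := hlt a (by simpa using haA)
      omega
  have hGsub : (Good : Set V) ⊆ eBoundary1 G v (A : Set V) := by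
    intro a ha
    have haG : a ∈ Good := ha
    obtain ⟨hfa, hadj, hd⟩ := hfchild a haG
    exact ⟨by simpa using (Finset.mem_filter.mp haG).1, f a, hfeB a haG, hadj⟩
  have heB : (Good.card : ℕ∞) ≤ (eBoundary G v (A : Set V)).encard := by
    calc (Good.card : ℕ∞) = (Good : Set V).encard :=
          (Set.encard_coe_eq_coe_finsetCard Good).symm
      _ = (f '' (Good : Set V)).encard := (hfinj.encard_image).symm
      _ ≤ (eBoundary G v (A : Set V)).encard := by
          apply Set.encard_le_encard
          rintro x ⟨a, ha, rfl⟩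
          exact hfeB a ha
  have heB1 : (Good.card : ℕ∞) ≤ (eBoundary1 G v (A : Set V)).encard := by
    calc (Good.card : ℕ∞) = (Good : Set V).encard :=
          (Set.encard_coe_eq_coe_finsetCard Good).symm
      _ ≤ _ := Set.encard_le_encard hGsub
  have hA0 : (A.card : ℝ≥0∞) ≠ 0 := by
    simp [Finset.card_eq_zero, hA.ne_empty]
  have hAtop : (A.card : ℝ≥0∞) ≠ ⊤ := by simp
  have key : ∀ (S : Set V) (k : ℕ), (Good.card : ℕ∞) ≤ S.encard → A.card ≤ k * Good.card →
      (1 : ℝ≥0∞) / k ≤ (S.encard : ℝ≥0∞) / (A.card : ℝ≥0∞) := by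
    intro S k hS hk
    have hk0 : k ≠ 0 := by
      rintro rfl
      have := Finset.card_pos.mpr hA
      rw [zero_mul] at hk
      omega
    have hGS : ((Good.card : ℕ) : ℝ≥0∞) ≤ (S.encard : ℝ≥0∞) := by
      have := ENat.toENNReal_le.mpr hS
      simpa using this
    rw [ENNReal.le_div_iff_mul_le (Or.inl hA0) (Or.inl hAtop)]
    have h13 : (1 : ℝ≥0∞) / k * A.card = (A.card : ℝ≥0∞) / k := by
      rw [one_div, mul_comm, div_eq_mul_inv]
    rw [h13]
    refine le_trans ?_ hGS
    rw [ENNReal.div_le_iff_le_mul (Or.inl (by exact_mod_cast hk0)) (Or.inl (by simp))]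
    rw [mul_comm]
    calc (A.card : ℝ≥0∞) ≤ ((k * Good.card : ℕ) : ℝ≥0∞) := by exact_mod_cast hk
      _ = (k : ℝ≥0∞) * Good.card := by push_cast; ring
  exact ⟨key _ 3 heB (by omega), key _ 6 heB1 (by omega)⟩

end TreePaper
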